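/- Let M be a compact topological space and G a topological group. If G is locally continuously perfect with constant r, then the group C(M,G) of continuous maps M → G with pointwise multiplication and the compact-open topology is locally continuously perfect with constant at most r. -/

import Mathlib

/-!
Postcompose the witnesses of `G`: for `V` the interior of `U`, the maps with range in `V` form a
compact-open neighbourhood of `1` (as `M` is compact), on which `f ↦ S ∘ f` is continuous because
`C(M, V) → C(M, G)` is an embedding; the commutator identity then holds pointwise. Off this
neighbourhood, `ContinuousMap.mkD` gives the witnesses the junk value `1`.
-/

open scoped commutatorElement

def LocallyContinuouslyPerfectWith (G : Type*) [Group G] [TopologicalSpace G] (r : ℕ) : Prop :=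
  ∃ U ∈ nhds (1 : G), ∃ S Sb : ℕ → G → G,
    (∀ i < r, ContinuousOn (S i) U ∧ ContinuousOn (Sb i) U ∧ S i 1 = 1) ∧
    ∀ g ∈ U, g = ((List.range r).map fun i => ⁅S i g, Sb i g⁆).prod

open Set

namespace ContinuousMap

variable {M X Y : Type*} [TopologicalSpace M] [TopologicalSpace X] [TopologicalSpace Y]

theorem mkD_comp_apply_of_continuousOn {S : X → Y} {V : Set X} (hS : ContinuousOn S V)
    {f : C(M, X)} (hf : range f ⊆ V) (g : C(M, Y)) (x : M) : mkD (S ∘ f) g x = S (f x) :=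
  mkD_apply_of_continuous (hS.comp_continuous f.continuous (range_subset_iff.1 hf))

theorem continuousOn_mkD_comp {S : X → Y} {V : Set X} (hS : ContinuousOn S V) (g : C(M, Y)) :
    ContinuousOn (fun f : C(M, X) ↦ mkD (S ∘ f) g) {f | range f ⊆ V} := by
  rw [continuousOn_iff_continuous_domRestrict]
  let ι : C(V, X) := ⟨Subtype.val, continuous_subtype_val⟩
  let restrictRange (f : {f : C(M, X) // range f ⊆ V}) : C(M, V) :=
    ⟨codRestrict f.1 V (range_subset_iff.1 f.2), f.1.continuous.codRestrict _⟩
  have hcod : Continuous restrictRange :=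
    (isInducing_postcomp ι .subtypeVal).continuous_iff.2 continuous_subtype_val
  refine ((continuous_postcomp ⟨V.domRestrict S, hS.domRestrict⟩).comp hcod).congr fun f ↦ ?_
  ext x
  exact (mkD_comp_apply_of_continuousOn hS f.2 g x).symm

theorem list_prod_apply {G : Type*} [Monoid G] [TopologicalSpace G] [ContinuousMul G]
    (l : List C(M, G)) (x : M) : l.prod x = (l.map (· x)).prod :=
  map_list_prod ((Pi.evalMonoidHom _ x).comp coeFnMonoidHom) l

end ContinuousMap

open ContinuousMap in
theorem LocallyContinuouslyPerfectWith.continuousMap {M G : Type*} [TopologicalSpace M]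
    [CompactSpace M] [Group G] [TopologicalSpace G] [IsTopologicalGroup G] {r : ℕ}
    (h : LocallyContinuouslyPerfectWith G r) : LocallyContinuouslyPerfectWith C(M, G) r := by
  obtain ⟨U, hU, S, Sb, hcont, hprod⟩ := h
  have hV : IsOpen {f : C(M, G) | range f ⊆ interior U} :=
    isOpen_setOfPred_range_subset isOpen_interior
  have h1V : (1 : C(M, G)) ∈ {f : C(M, G) | range f ⊆ interior U} :=
    range_subset_iff.2 fun _ ↦ mem_interior_iff_mem_nhds.2 hU
  refine ⟨_, hV.mem_nhds h1V, fun i f ↦ mkD (S i ∘ f) 1, fun i f ↦ mkD (Sb i ∘ f) 1,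
    fun i hi ↦ ?_, fun f hf ↦ ?_⟩
  · obtain ⟨hS, hSb, hS1⟩ := hcont i hi
    refine ⟨continuousOn_mkD_comp (hS.mono interior_subset) 1,
      continuousOn_mkD_comp (hSb.mono interior_subset) 1, ?_⟩
    ext x
    exact (mkD_comp_apply_of_continuousOn (hS.mono interior_subset) h1V 1 x).trans hS1
  · ext x
    rw [list_prod_apply, List.map_map]
    refine (hprod _ (interior_subset (hf (mem_range_self x)))).trans
      (congrArg _ (List.map_congr_left fun i hi ↦ ?_))
    obtain ⟨hS, hSb, -⟩ := hcont i (List.mem_range.1 hi)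
    simp only [Function.comp_apply, commutatorElement_def, mul_apply, inv_apply,
      mkD_comp_apply_of_continuousOn (hS.mono interior_subset) hf,
      mkD_comp_apply_of_continuousOn (hSb.mono interior_subset) hf]

/-- For a compact space `M`, if `G` is locally continuously perfect with constant `r`, then
the group `C(M, G)` of continuous maps with pointwise multiplication and the compact-open
topology is locally continuously perfect with constant at most `r`. -/
theorem locallyContinuouslyPerfect_continuousMap (M G : Type*) [TopologicalSpace M]
    [CompactSpace M] [Group G] [TopologicalSpace G] [IsTopologicalGroup G] (r : ℕ)
    (h : LocallyContinuouslyPerfectWith G r) :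
    ∃ r' ≤ r, LocallyContinuouslyPerfectWith C(M, G) r' :=
  ⟨r, le_rfl, h.continuousMap⟩
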